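/- Let n and r be positive integers with n > r ≥ 2 and r even. Every n-element rank-r matroid with no U_{3,4}-minor has at most binom(2n/r, 2)^{r/2} bases. -/

import Mathlib

open Matroid Set Filter

variable {α : Type*}

/-- The number of bases of a matroid. -/
noncomputable def Matroid.numBases (M : Matroid α) : ℕ := {B : Set α | M.IsBase B}.ncard

/-- Deletion of a set of elements from a matroid. -/
def Matroid.del (M : Matroid α) (D : Set α) : Matroid α := M ↾ (M.E \ D)

/-- Contraction of a set of elements in a matroid, defined by duality. -/
def Matroid.con (M : Matroid α) (C : Set α) : Matroid α := (M✶ ↾ (M✶.E \ C))✶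

/-- `N` is a minor of `M`: it is obtained by contracting a set `C` and deleting a set `D`. -/
def Matroid.IsMinorOf (N M : Matroid α) : Prop :=
  ∃ C D : Set α, C ⊆ M.E ∧ D ⊆ M.E ∧ Disjoint C D ∧ N = (M.con C).del D

/-- `M` is (a copy of) the uniform matroid `U_{s,t}`: it has `t` elements and its bases are
exactly the `s`-element subsets of the ground set. -/
def Matroid.IsUnif (M : Matroid α) (s t : ℕ) : Prop :=
  M.E.Finite ∧ M.E.ncard = t ∧ ∀ B, M.IsBase B ↔ B ⊆ M.E ∧ B.ncard = s

/-- `M` has a minor isomorphic to the uniform matroid `U_{s,t}`. -/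
def Matroid.HasUnifMinor (M : Matroid α) (s t : ℕ) : Prop :=
  ∃ N : Matroid α, N.IsMinorOf M ∧ N.IsUnif s t

/-- `M` has a restriction isomorphic to the uniform matroid `U_{s,t}`. -/
def Matroid.HasUnifRestriction (M : Matroid α) (s t : ℕ) : Prop :=
  ∃ X ⊆ M.E, (M ↾ X).IsUnif s t

/-- `M` has rank `r`. -/
def Matroid.RankEq (M : Matroid α) (r : ℕ) : Prop := ∃ B, M.IsBase B ∧ B.ncard = r

/-- `M` is a simple matroid: every single element and every pair of distinct elements
of the ground set is independent. -/
def Matroid.IsSimple (M : Matroid α) : Prop :=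
  (∀ e ∈ M.E, M.Indep {e}) ∧ ∀ e ∈ M.E, ∀ f ∈ M.E, e ≠ f → M.Indep {e, f}


/-!
A matroid without a `U_{3,4}`-minor has no circuit with more than three elements, and two
triangles through a common point that span rank three are impossible: removing that point would
leave a four-element circuit. Hence the line spanned by a triangle splits off as a rank-two piece,
and a set without triangles is free up to parallel classes, so two parallel classes split off.
Peeling off such pieces partitions the non-loops into `r/2` sets of rank at most two. Every base
meets each piece in exactly two elements, so there are at most `∏ⱼ binom(|Pⱼ|, 2)` bases, and
AM-GM bounds this product by `binom(2n/r, 2)^(r/2)`.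
-/

namespace Set

variable {ι : Type*} [Fintype ι]

theorem ncard_le_prod_choose {P : ι → Set α} (hP : ∀ j, (P j).Finite) {k : ι → ℕ}
    {𝒜 : Set (Set α)} (h𝒜 : ∀ B ∈ 𝒜, B ⊆ ⋃ j, P j) (hk : ∀ B ∈ 𝒜, ∀ j, (B ∩ P j).ncard = k j) :
    𝒜.ncard ≤ ∏ j, (P j).ncard.choose (k j) := by
  have hfin : ∀ j, {t ⊆ P j | t.ncard = k j}.Finite :=
    fun j => (hP j).finite_subsets.subset fun t ht => ht.1
  have h : 𝒜.encard ≤ ∏ j, ((P j).ncard.choose (k j) : ℕ∞) := by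
    calc 𝒜.encard ≤ (univ.pi fun j => {t ⊆ P j | t.ncard = k j}).encard := by
          refine encard_le_encard_of_injOn (f := fun B j => B ∩ P j)
            (fun B hB j _ => ⟨inter_subset_right, hk B hB j⟩) fun B₁ h₁ B₂ h₂ h => ?_
          rw [← inter_eq_left.2 (h𝒜 B₁ h₁), ← inter_eq_left.2 (h𝒜 B₂ h₂), inter_iUnion,
            inter_iUnion]
          exact iUnion_congr (congrFun h)
      _ = ∏ j, ((P j).ncard.choose (k j) : ℕ∞) := by
          rw [encard_pi_eq_prod_encard]
          refine Finset.prod_congr rfl fun j _ => ?_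
          rw [← (hfin j).cast_ncard_eq, ncard_powerset_ncard (hP j)]
  rw [← Nat.cast_prod] at h
  rw [← ENat.natCast_le_natCast, (finite_of_encard_le_coe h).cast_ncard_eq]
  exact h

theorem ncard_inter_eq_of_forall_le {B : Set α} {P : ι → Set α} {k : ℕ} (hB : B ⊆ ⋃ j, P j)
    (hle : ∀ j, (B ∩ P j).ncard ≤ k) (hcard : Fintype.card ι * k ≤ B.ncard) (j : ι) :
    (B ∩ P j).ncard = k := by
  refine (hle j).antisymm (not_lt.1 fun hlt => ?_)
  have hsum : B.ncard ≤ ∑ i, (B ∩ P i).ncard := by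
    conv_lhs => rw [← inter_eq_left.2 hB, inter_iUnion]
    exact ncard_iUnion_le_of_fintype _
  have hlt' : ∑ i, (B ∩ P i).ncard < ∑ _i : ι, k :=
    Finset.sum_lt_sum (fun i _ => hle i) ⟨j, Finset.mem_univ _, hlt⟩
  rw [Finset.sum_const, Finset.card_univ, smul_eq_mul] at hlt'
  omega

end Set

namespace Real

variable {ι : Type*} [Fintype ι]

theorem prod_le_pow_of_sum_le {z : ι → ℝ} (hz : ∀ j, 0 ≤ z j) {x : ℝ}
    (hsum : ∑ j, z j ≤ Fintype.card ι * x) : ∏ j, z j ≤ x ^ Fintype.card ι := by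
  rcases isEmpty_or_nonempty ι with hι | hι
  · simp
  have hc : (0 : ℝ) < Fintype.card ι := by exact_mod_cast Fintype.card_pos
  have hgm := geom_mean_le_arith_mean Finset.univ (fun _ => 1) z (by simp) (by simpa using hc)
    fun j _ => hz j
  simp only [rpow_one, one_mul, Finset.sum_const, Finset.card_univ, nsmul_eq_mul,
    mul_one] at hgm
  have hprod : 0 ≤ ∏ j, z j := Finset.prod_nonneg fun j _ => hz j
  calc ∏ j, z j = ((∏ j, z j) ^ (Fintype.card ι : ℝ)⁻¹) ^ Fintype.card ι := by
        rw [← rpow_natCast, ← rpow_mul hprod, inv_mul_cancel₀ hc.ne', rpow_one]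
    _ ≤ x ^ Fintype.card ι := by
        refine pow_le_pow_left₀ (rpow_nonneg hprod _) (hgm.trans ?_) _
        rwa [div_le_iff₀ hc, mul_comm]

theorem prod_choose_two_le_pow {m : ι → ℕ} (hm : ∀ j, 1 ≤ m j) {x : ℝ}
    (hsum : ∑ j, (m j : ℝ) ≤ Fintype.card ι * x) :
    ∏ j, ((m j).choose 2 : ℝ) ≤ (x * (x - 1) / 2) ^ Fintype.card ι := by
  have hm' : ∀ j, (1 : ℝ) ≤ m j := fun j => by exact_mod_cast hm j
  have hsum' : ∑ j, ((m j : ℝ) - 1) ≤ Fintype.card ι * (x - 1) := by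
    rw [Finset.sum_sub_distrib, Finset.sum_const, Finset.card_univ, nsmul_eq_mul, mul_one]
    linarith
  have hprod : ∏ j, (m j : ℝ) ≤ x ^ Fintype.card ι :=
    prod_le_pow_of_sum_le (fun j => by linarith [hm' j]) hsum
  have hprod' : ∏ j, ((m j : ℝ) - 1) ≤ (x - 1) ^ Fintype.card ι :=
    prod_le_pow_of_sum_le (fun j => by linarith [hm' j]) hsum'
  calc ∏ j, ((m j).choose 2 : ℝ)
      = (∏ j, (m j : ℝ)) * (∏ j, ((m j : ℝ) - 1)) / 2 ^ Fintype.card ι := by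
        simp only [Nat.cast_choose_two, Finset.prod_div_distrib, Finset.prod_mul_distrib,
          Finset.prod_const, Finset.card_univ]
    _ ≤ x ^ Fintype.card ι * (x - 1) ^ Fintype.card ι / 2 ^ Fintype.card ι := by
        gcongr
        · exact Finset.prod_nonneg fun j _ => by linarith [hm' j]
        · exact (Finset.prod_nonneg fun j _ => by linarith [hm' j]).trans hprod
    _ = (x * (x - 1) / 2) ^ Fintype.card ι := by rw [div_pow, mul_pow]

end Real

namespace Matroid

open scoped Function

variable {M N : Matroid α} {C I J T X F : Set α} {a e x : α}

lemma IsMinor.isMinorOf (h : N ≤m M) : N.IsMinorOf M := by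
  obtain ⟨C, D, hC, hD, hCD, rfl⟩ := h.exists_eq_contract_delete_disjoint
  exact ⟨C, D, hC, hD, hCD, rfl⟩

lemma IsCircuit.restrict_isUnif {k : ℕ} (hC : M.IsCircuit C) (hk : C.ncard = k + 1) :
    (M ↾ C).IsUnif k (k + 1) := by
  have hfin : C.Finite := finite_of_ncard_pos (by omega)
  refine ⟨hfin, hk, fun B => ?_⟩
  rw [restrict_ground_eq, isBase_restrict_iff, hC.isBasis_iff_eq_sdiff_singleton]
  constructor
  · rintro ⟨e, he, rfl⟩
    rw [ncard_sdiff_singleton_of_mem he, hk]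
    exact ⟨sdiff_subset, rfl⟩
  · rintro ⟨hBC, hB⟩
    obtain ⟨e, heC, heB⟩ := exists_of_ssubset (hBC.ssubset_of_ne (by rintro rfl; omega))
    refine ⟨e, heC, eq_of_subset_of_ncard_le (subset_sdiff_singleton hBC heB) ?_ hfin.sdiff⟩
    rw [ncard_sdiff_singleton_of_mem heC]
    omega

lemma IsCircuit.hasUnifMinor {k : ℕ} (hC : M.IsCircuit C) (hk : k + 1 ≤ C.encard) :
    M.HasUnifMinor k (k + 1) := by
  obtain ⟨K, hKC, hK⟩ := exists_subset_encard_eq hk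
  have hKfin : K.Finite := finite_of_encard_eq_coe hK
  have hKc : (M ／ (C \ K)).IsCircuit K :=
    hC.contract_sdiff_isCircuit (nonempty_of_encard_ne_zero (by simp [hK])) hKC
  refine ⟨(M ／ (C \ K)) ↾ K, ?_, hKc.restrict_isUnif ?_⟩
  · rw [← delete_compl hKc.subset_ground]
    exact (contract_delete_isMinor ..).isMinorOf
  · rw [← hKfin.cast_ncard_eq] at hK
    exact_mod_cast hK

lemma IsCircuit.encard_le_three (hM : ¬ M.HasUnifMinor 3 4) (hC : M.IsCircuit C) :
    C.encard ≤ 3 := by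
  by_contra! h
  exact hM (hC.hasUnifMinor (Order.add_one_le_of_lt h))

lemma IsCircuit.union_subset_closure_sdiff (hT : M.IsCircuit T) (hC : M.IsCircuit C) (haC : a ∈ C)
    (heC : e ∉ C) : T ∪ C ⊆ M.closure (((T ∪ C) \ {a}) \ {e}) := by
  set Y := ((T ∪ C) \ {a}) \ {e}
  have hYE : Y ⊆ M.E :=
    sdiff_subset.trans (sdiff_subset.trans (union_subset hT.subset_ground hC.subset_ground))
  have hCY : C ⊆ M.closure Y := (hC.subset_closure_sdiff_singleton a).trans
    (M.closure_subset_closure fun x hx => ⟨⟨Or.inr hx.1, hx.2⟩, fun hxe => heC (hxe ▸ hx.1)⟩)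
  have hTY : T \ {e} ⊆ M.closure Y := by
    intro x hx
    by_cases hxa : x = a
    · exact hCY (hxa ▸ haC)
    · exact M.subset_closure Y hYE ⟨⟨Or.inl hx.1, hxa⟩, hx.2⟩
  exact union_subset ((hT.subset_closure_sdiff_singleton e).trans
    (closure_subset_closure_of_subset_closure hTY)) hCY

lemma IsCircuit.eRk_union_le_eRk_sdiff_sdiff (hT : M.IsCircuit T) (hC : M.IsCircuit C)
    (hTC : T ∩ C = {a}) (he : e ∈ (T ∪ C) \ {a}) :
    M.eRk (T ∪ C) ≤ M.eRk (((T ∪ C) \ {a}) \ {e}) := by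
  obtain ⟨haT, haC⟩ : a ∈ T ∩ C := hTC ▸ mem_singleton a
  have hcl : T ∪ C ⊆ M.closure (((T ∪ C) \ {a}) \ {e}) := by
    rcases he with ⟨heT | heC, hea⟩
    · exact hT.union_subset_closure_sdiff hC haC fun heC => hea (hTC ▸ ⟨heT, heC⟩)
    · rw [union_comm T C]
      exact hC.union_subset_closure_sdiff hT haT fun heT => hea (hTC ▸ ⟨heT, heC⟩)
  exact (M.eRk_mono hcl).trans_eq (M.eRk_closure_eq _)

lemma hasUnifMinor_of_triangles (hT : M.IsCircuit T) (hC : M.IsCircuit C) (hT3 : T.encard = 3)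
    (hC3 : C.encard = 3) (haT : a ∈ T) (haC : a ∈ C) (hCT : Disjoint (C \ {a}) (M.closure T)) :
    M.HasUnifMinor 3 4 := by
  have hTcl : T ⊆ M.closure T := M.subset_closure T hT.subset_ground
  have hinter : T ∩ C = {a} := subset_antisymm
    (fun x hx => by_contra fun hxa => hCT.ne_of_mem ⟨hx.2, hxa⟩ (hTcl hx.1) rfl)
    (singleton_subset_iff.2 ⟨haT, haC⟩)
  obtain ⟨c, hcC, hca⟩ : (C \ {a}).Nonempty := by
    rw [← encard_pos]
    have := encard_sdiff_singleton_add_one haC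
    rw [hC3] at this
    generalize (C \ {a}).encard = x at *
    enat_to_nat; omega
  have hcT : c ∉ M.closure T := hCT.notMem_of_mem_left ⟨hcC, hca⟩
  have hrk : 3 ≤ M.eRk (T ∪ C) := by
    have h1 := hT.eRk_add_one_eq
    have h2 := eRk_insert_eq_add_one ⟨hC.subset_ground hcC, hcT⟩
    rw [hT3] at h1
    calc (3 : ℕ∞) = M.eRk (insert c T) := by
          rw [h2]; generalize M.eRk T = x at *; enat_to_nat; omega
      _ ≤ M.eRk (T ∪ C) := M.eRk_mono (insert_subset (Or.inr hcC) subset_union_left)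
  set S := (T ∪ C) \ {a}
  have hSE : S ⊆ M.E := sdiff_subset.trans (union_subset hT.subset_ground hC.subset_ground)
  have hS4 : S.encard = 4 := by
    have h1 := encard_union_add_encard_inter T C
    have h2 := encard_sdiff_singleton_add_one (show a ∈ T ∪ C from Or.inl haT)
    rw [hinter, encard_singleton, hT3, hC3, ← h2] at h1
    generalize S.encard = x at *
    enat_to_nat; omega
  have hS_dep : ¬ M.Indep S := by
    obtain ⟨C', hC'S, hC'⟩ := hT.elimination hC (fun h => hcT (hTcl (h ▸ hcC))) a
    exact fun hS => hC'.not_indep (hS.subset hC'S)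
  have hS_indep : ∀ s ∈ S, M.Indep (S \ {s}) := by
    intro s hs
    have h3 : (S \ {s}).encard = 3 := by
      have := encard_sdiff_singleton_add_one hs
      rw [hS4] at this
      generalize (S \ {s}).encard = x at *
      enat_to_nat; omega
    refine (M.isRkFinite_of_finite (finite_of_encard_eq_coe h3)).indep_of_encard_le_eRk ?_
    exact h3 ▸ hrk.trans (hT.eRk_union_le_eRk_sdiff_sdiff hC hinter hs)
  have hS : M.IsCircuit S :=
    isCircuit_iff_dep_forall_sdiff_singleton_indep.2 ⟨⟨hS_dep, hSE⟩, hS_indep⟩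
  exact hS.hasUnifMinor (by rw [hS4]; rfl)

lemma eRk_sdiff_add_encard (hJ : M.Indep J) (hJF : J ⊆ F) (hFX : F ⊆ X)
    (hFJ : F ⊆ M.closure J) (hsep : ∀ I ⊆ X \ F, M.Indep I → M.Indep (I ∪ J)) :
    M.eRk (X \ F) + J.encard = M.eRk X := by
  obtain ⟨I, hI⟩ := M.exists_isBasis' (X \ F)
  refine le_antisymm ?_ ?_
  · have hIJ : Disjoint I J := disjoint_sdiff_left.mono hI.subset hJF
    rw [← hI.encard_eq_eRk, ← encard_union_eq hIJ]
    exact (hsep I hI.subset hI.indep).encard_le_eRk_of_subset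
      (union_subset (hI.subset.trans sdiff_subset) (hJF.trans hFX))
  · calc M.eRk X ≤ M.eRk F + M.eRk (X \ F) := M.eRk_le_eRk_add_eRk_sdiff hFX
      _ ≤ J.encard + M.eRk (X \ F) := by
          grw [M.eRk_mono hFJ, eRk_closure_eq, hJ.eRk_eq_encard]
      _ = M.eRk (X \ F) + J.encard := add_comm _ _

lemma Indep.exists_isCircuit_of_not_indep_union (hI : M.Indep I) (hJ : M.Indep J)
    (hIJ : ¬ M.Indep (I ∪ J)) :
    ∃ C ⊆ I ∪ J, M.IsCircuit C ∧ (∃ b ∈ C, b ∉ I) ∧ ∃ c ∈ C, c ∈ I := by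
  obtain ⟨C, hCIJ, hC⟩ :=
    Dep.exists_isCircuit_subset ⟨hIJ, union_subset hI.subset_ground hJ.subset_ground⟩
  refine ⟨C, hCIJ, hC, not_subset.1 fun h => hC.not_indep (hI.subset h), ?_⟩
  by_contra! h
  exact hC.not_indep (hJ.subset fun y hy => (hCIJ hy).resolve_left (h y hy))

lemma indep_union_sdiff_singleton_of_triangle (hM : ¬ M.HasUnifMinor 3 4) (hT : M.IsCircuit T)
    (hT3 : T.encard = 3) (hxT : x ∈ T) (hI : M.Indep I) (hIT : Disjoint I (M.closure T)) :
    M.Indep (I ∪ (T \ {x})) := by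
  have hJ : M.Indep (T \ {x}) := hT.sdiff_singleton_indep hxT
  have hTcl : T ⊆ M.closure T := M.subset_closure T hT.subset_ground
  by_contra hdep
  obtain ⟨C, hCIJ, hC, ⟨b, hbC, hbI⟩, c, hcC, hcI⟩ := hI.exists_isCircuit_of_not_indep_union hJ hdep
  -- `c` is spanned by the rest of `C`, which therefore cannot lie in the line spanned by `T`
  obtain ⟨d, ⟨hdC, hdc⟩, hdT⟩ : ∃ d ∈ C \ {c}, d ∉ M.closure T := by
    by_contra! h
    exact hIT.ne_of_mem hcI (closure_subset_closure_of_subset_closure h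
      (hC.mem_closure_sdiff_singleton_of_mem hcC)) rfl
  have hdI : d ∈ I := (hCIJ hdC).resolve_right fun hdJ => hdT (hTcl hdJ.1)
  have hbcd : ({b, c, d} : Set α).encard = 3 := encard_eq_three.2 ⟨b, c, d,
    fun h => hbI (h ▸ hcI), fun h => hbI (h ▸ hdI), fun h => hdc h.symm, rfl⟩
  have hCeq : {b, c, d} = C := (toFinite _).eq_of_subset_of_encard_le
    (insert_subset hbC (insert_subset hcC (singleton_subset_iff.2 hdC)))
    (hbcd ▸ hC.encard_le_three hM)
  refine hM (hasUnifMinor_of_triangles hT hC hT3 (hCeq ▸ hbcd)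
    ((hCIJ hbC).resolve_left hbI).1 hbC (hIT.mono_left ?_))
  rintro y ⟨hyC, hyb⟩
  rw [← hCeq] at hyC
  rcases hyC with rfl | rfl | rfl
  exacts [absurd rfl hyb, hcI, hdI]

lemma indep_union_of_forall_notMem_closure_singleton (hM : ¬ M.HasUnifMinor 3 4)
    (hX : ∀ C ⊆ X, M.IsCircuit C → C.encard ≠ 3) (hI : M.Indep I) (hJ : M.Indep J)
    (hIJX : I ∪ J ⊆ X) (hIJ : ∀ c ∈ I, ∀ b ∈ J, c ∉ M.closure {b}) : M.Indep (I ∪ J) := by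
  by_contra hdep
  obtain ⟨C, hCIJ, hC, ⟨b, hbC, hbI⟩, c, hcC, hcI⟩ := hI.exists_isCircuit_of_not_indep_union hJ hdep
  have hbc : b ≠ c := fun h => hbI (h ▸ hcI)
  have hC2 : C.encard ≤ 2 := by
    have h3 := hC.encard_le_three hM
    have hne := hX C (hCIJ.trans hIJX) hC
    generalize C.encard = k at *
    enat_to_nat; omega
  have hCeq : {b, c} = C := (toFinite _).eq_of_subset_of_encard_le
    (insert_subset hbC (singleton_subset_iff.2 hcC)) ((encard_pair hbc).symm ▸ hC2)
  have hcb := hC.mem_closure_sdiff_singleton_of_mem hcC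
  rw [← hCeq, pair_sdiff_right hbc] at hcb
  exact hIJ c hcI b ((hCIJ hbC).resolve_left hbI) hcb

lemma exists_eRk_sdiff_add_two (hM : ¬ M.HasUnifMinor 3 4) (h2 : 2 ≤ M.eRk X) :
    ∃ F ⊆ X, M.eRk F ≤ 2 ∧ M.eRk (X \ F) + 2 = M.eRk X := by
  suffices ∃ J F, M.Indep J ∧ J.encard = 2 ∧ J ⊆ F ∧ F ⊆ X ∧ F ⊆ M.closure J ∧
      ∀ I ⊆ X \ F, M.Indep I → M.Indep (I ∪ J) by
    obtain ⟨J, F, hJ, hJ2, hJF, hFX, hFJ, hsep⟩ := this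
    refine ⟨F, hFX, ?_, hJ2 ▸ eRk_sdiff_add_encard hJ hJF hFX hFJ hsep⟩
    grw [M.eRk_mono hFJ, eRk_closure_eq, hJ.eRk_eq_encard, hJ2]
  by_cases hX : ∃ T ⊆ X, M.IsCircuit T ∧ T.encard = 3
  · -- a triangle `T` in `X`: peel off the whole line it spans
    obtain ⟨T, hTX, hT, hT3⟩ := hX
    obtain ⟨x, hxT⟩ : T.Nonempty := nonempty_of_encard_ne_zero (by simp [hT3])
    refine ⟨T \ {x}, X ∩ M.closure T, hT.sdiff_singleton_indep hxT, ?_,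
      subset_inter (sdiff_subset.trans hTX)
        (sdiff_subset.trans (M.subset_closure T hT.subset_ground)),
      inter_subset_left, by rw [hT.closure_sdiff_singleton_eq]; exact inter_subset_right,
      fun I hIXF hI => indep_union_sdiff_singleton_of_triangle hM hT hT3 hxT hI ?_⟩
    · have := encard_sdiff_singleton_add_one hxT
      rw [hT3] at this
      generalize (T \ {x}).encard = k at *
      enat_to_nat; omega
    · exact disjoint_left.2 fun y hyI hyT => (hIXF hyI).2 ⟨(hIXF hyI).1, hyT⟩
  · -- no triangle in `X`: peel off two parallel classes
    push Not at hX
    obtain ⟨J, hJX, hJ, hJ2⟩ := le_eRk_iff.1 h2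
    refine ⟨J, {y ∈ X | ∃ b ∈ J, y ∈ M.closure {b}}, hJ, hJ2,
      fun b hb => ⟨hJX hb, b, hb, M.mem_closure_of_mem' rfl (hJ.subset_ground hb)⟩,
      fun y hy => hy.1, fun y ⟨_, b, hb, hyb⟩ =>
        M.closure_subset_closure (singleton_subset_iff.2 hb) hyb,
      fun I hIXF hI => indep_union_of_forall_notMem_closure_singleton hM hX hI hJ
        (union_subset (hIXF.trans sdiff_subset) hJX)
        fun c hcI b hb hcb => (hIXF hcI).2 ⟨(hIXF hcI).1, b, hb, hcb⟩⟩

theorem exists_partition_eRk_le_two (hM : ¬ M.HasUnifMinor 3 4) :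
    ∀ (s : ℕ) {X : Set α}, M.eRk X = 2 * s → ∃ P : Fin s → Set α, (∀ j, P j ⊆ X) ∧
      Pairwise (Disjoint on P) ∧ (∀ e ∈ X, M.IsNonloop e → ∃ j, e ∈ P j) ∧ ∀ j, M.eRk (P j) ≤ 2
  | 0, X, hX => by
    refine ⟨Fin.elim0, fun j => j.elim0, fun i => i.elim0, fun e heX he => ?_, fun j => j.elim0⟩
    exact absurd ((eRk_eq_zero_iff'.1 (by simpa using hX)) ⟨heX, he.mem_ground⟩) he.not_isLoop
  | s + 1, X, hX => by
    obtain ⟨F, hFX, hF, hXF⟩ := exists_eRk_sdiff_add_two hM (by rw [hX]; norm_cast; omega)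
    obtain ⟨P, hPX, hPdisj, hPcov, hP⟩ := exists_partition_eRk_le_two hM s (X := X \ F) (by
      rw [hX] at hXF
      generalize M.eRk (X \ F) = k at *
      enat_to_nat; omega)
    refine ⟨Fin.cons F P, ?_, ?_, ?_, ?_⟩
    · exact Fin.cases hFX fun j => (hPX j).trans sdiff_subset
    · intro i j hij
      induction i using Fin.cases <;> induction j using Fin.cases
      · exact absurd rfl hij
      · exact disjoint_sdiff_right.mono_right (hPX _)
      · exact (disjoint_sdiff_right.mono_right (hPX _)).symm
      · exact hPdisj fun h => hij (congrArg Fin.succ h)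
    · intro e heX he
      by_cases heF : e ∈ F
      · exact ⟨0, heF⟩
      · obtain ⟨j, hj⟩ := hPcov e ⟨heX, heF⟩ he
        exact ⟨j.succ, hj⟩
    · exact Fin.cases hF hP

lemma RankEq.eRank_eq {r : ℕ} (h : M.RankEq r) (hfin : M.E.Finite) : M.eRank = r := by
  obtain ⟨B, hB, rfl⟩ := h
  rw [← hB.encard_eq_eRank, (hfin.subset hB.subset_ground).cast_ncard_eq]

theorem exists_numBases_le_prod_choose (hM : ¬ M.HasUnifMinor 3 4) (hfin : M.E.Finite) {s : ℕ}
    (hr : M.eRank = 2 * s) : ∃ m : Fin s → ℕ, (∀ j, 1 ≤ m j) ∧ ∑ j, m j ≤ M.E.ncard ∧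
      M.numBases ≤ ∏ j, (m j).choose 2 := by
  obtain ⟨P, hPE, hPdisj, hPcov, hPrk⟩ :=
    exists_partition_eRk_le_two hM s (X := M.E) (by rwa [eRk_ground])
  have hPfin : ∀ j, (P j).Finite := fun j => hfin.subset (hPE j)
  have hcov : ∀ B, M.IsBase B → B ⊆ ⋃ j, P j := fun B hB b hb =>
    mem_iUnion.2 (hPcov b (hB.subset_ground hb) (hB.indep.isNonloop_of_mem hb))
  have htrace : ∀ B, M.IsBase B → ∀ j, (B ∩ P j).ncard = 2 := by
    intro B hB
    have hBfin := hfin.subset hB.subset_ground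
    refine ncard_inter_eq_of_forall_le (hcov B hB) (fun j => ?_) ?_
    · have h := ((hB.indep.subset inter_subset_left).encard_le_eRk_of_subset
        inter_subset_right).trans (hPrk j)
      rw [← (hBfin.subset inter_subset_left).cast_ncard_eq] at h
      exact_mod_cast h
    · have h := hB.encard_eq_eRank
      rw [hr, ← hBfin.cast_ncard_eq] at h
      norm_cast at h
      rw [Fintype.card_fin, h, mul_comm]
  obtain ⟨B, hB⟩ := M.exists_isBase
  refine ⟨fun j => (P j).ncard, fun j => ?_, ?_, ncard_le_prod_choose hPfin hcov htrace⟩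
  · have := ncard_le_ncard (inter_subset_right : B ∩ P j ⊆ P j) (hPfin j)
    rw [htrace B hB j] at this
    exact one_le_two.trans this
  · rw [← finsum_eq_sum_of_fintype, ← ncard_iUnion_of_finite hPfin hPdisj]
    exact ncard_le_ncard (iUnion_subset hPE) hfin

end Matroid

theorem unif_34_minor_free_base_bound_general (n r : ℕ) (hre : Even r)
    (M : Matroid α) (hfin : M.E.Finite) (hn : M.E.ncard = n) (hrank : M.RankEq r)
    (hminor : ¬ M.HasUnifMinor 3 4) :
    (M.numBases : ℝ) ≤
      ((2 * (n : ℝ) / (r : ℝ)) * (2 * (n : ℝ) / (r : ℝ) - 1) / 2) ^ (r / 2) := by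
  obtain ⟨s, rfl⟩ := hre
  obtain ⟨m, hm, hmn, hM⟩ := Matroid.exists_numBases_le_prod_choose hminor hfin (s := s)
    (by rw [hrank.eRank_eq hfin]; push_cast; ring)
  have hsum : ∑ j, (m j : ℝ) ≤ Fintype.card (Fin s) * (2 * n / ((s + s : ℕ) : ℝ)) := by
    rcases Nat.eq_zero_or_pos s with rfl | hs
    · simp
    · rw [Fintype.card_fin, show (s : ℝ) * (2 * n / ((s + s : ℕ) : ℝ)) = n by
        push_cast; field_simp; ring]
      exact_mod_cast hn ▸ hmn
  calc (M.numBases : ℝ) ≤ ∏ j, ((m j).choose 2 : ℝ) := by exact_mod_cast hM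
    _ ≤ _ := by
      convert Real.prod_choose_two_le_pow hm hsum using 2
      rw [Fintype.card_fin]; omega

/-- Every `n`-element rank-`r` matroid (`r` even, `n > r ≥ 2`) with no `U_{3,4}`-minor has at
most `binom(2n/r, 2)^(r/2)` bases, where `binom(x,2) = x(x-1)/2` for real `x`. -/
theorem unif_34_minor_free_base_bound (n r : ℕ) (hr : 2 ≤ r) (hrn : r < n) (hre : Even r)
    (M : Matroid α) (hfin : M.E.Finite) (hn : M.E.ncard = n) (hrank : M.RankEq r)
    (hminor : ¬ M.HasUnifMinor 3 4) :
    (M.numBases : ℝ) ≤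
      ((2 * (n : ℝ) / (r : ℝ)) * (2 * (n : ℝ) / (r : ℝ) - 1) / 2) ^ (r / 2) :=
  unif_34_minor_free_base_bound_general n r hre M hfin hn hrank hminor
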